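/- arXiv:1811.11635 — 5 statements merged into one kernel-verified Lean document; each statement's English description precedes it below -/
import Mathlib

section
/- Let Y₁, ..., Y_m be independent Bernoulli random variables with P(Y_s = 1) = p_s, and values v₁ ≥ v₂ ≥ ... ≥ v_m ≥ 0. Let b = min{a : Σ_{s=1}^a p_s ≥ 1} (assume Σ_s p_s ≥ 1). Then E[max_s Y_s · v_s] ≥ (1 - 1/e) · (v_b + Σ_{s=1}^m p_s · (v_s - v_b)⁺). -/
/-- Expected value of `max_{s ∈ A} v s` (with `max ∅ = 0`) where each index `s`
is included in `A` independently with probability `p s`. -/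
noncomputable def expectedMax {m : ℕ} (p v : Fin m → ℝ) : ℝ :=
  ∑ A : Finset (Fin m),
    (∏ s ∈ A, p s) * (∏ s ∈ Aᶜ, (1 - p s)) * (A.fold max 0 v)

/-!
Write `v` as the sum of its nonnegative gaps `v s - v (s + 1)`. Then
`max_{s ∈ A} v s ≥ v (min A) = ∑ s, gap s · [A meets {t ≤ s}]`, so the expected maximum is at
least `∑ s, gap s · (1 - ∏_{t ≤ s} (1 - p t))`. Lowering `p` to the capped probabilities `p'`
(total mass `1`, zero after `b`) only decreases this, and since the partial sums of `p'` lie in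
`[0, 1]`, concavity gives `1 - ∏ (1 - p' t) ≥ 1 - exp (-∑ p' t) ≥ (1 - 1/e) ∑ p' t`. Summing by
parts turns the bound into `(1 - 1/e) ∑ t, p' t · v t`, which is the right-hand side.
-/

open Finset

noncomputable section

section BernoulliWeight

variable {ι : Type*} [Fintype ι] [DecidableEq ι]

def bernoulliWeight (p : ι → ℝ) (A : Finset ι) : ℝ :=
  (∏ s ∈ A, p s) * ∏ s ∈ Aᶜ, (1 - p s)

lemma bernoulliWeight_nonneg {p : ι → ℝ} (hp0 : ∀ s, 0 ≤ p s) (hp1 : ∀ s, p s ≤ 1)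
    (A : Finset ι) : 0 ≤ bernoulliWeight p A :=
  mul_nonneg (prod_nonneg fun s _ => hp0 s) (prod_nonneg fun s _ => sub_nonneg.2 (hp1 s))

/-- Expanding `∏ t, (p t · [t ∉ S] + (1 - p t)) = ∏ t ∈ S, (1 - p t)` over subsets keeps exactly
the terms of the sets `A` disjoint from `S`. -/
lemma sum_bernoulliWeight_of_disjoint (p : ι → ℝ) (S : Finset ι) :
    ∑ A, (if Disjoint A S then bernoulliWeight p A else 0) = ∏ t ∈ S, (1 - p t) := by
  have hexpand := Fintype.prod_add (fun t => if t ∉ S then p t else 0) (fun t => 1 - p t)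
  have hleft : ∀ t, (if t ∉ S then p t else 0) + (1 - p t) = if t ∈ S then 1 - p t else 1 := by
    intro t
    by_cases ht : t ∈ S <;> simp [ht]
  simp only [hleft, Fintype.prod_ite_mem, prod_ite_zero, ← disjoint_left] at hexpand
  rw [hexpand]
  refine sum_congr rfl fun A _ => ?_
  split_ifs <;> simp [bernoulliWeight]

lemma sum_bernoulliWeight_of_not_disjoint (p : ι → ℝ) (S : Finset ι) :
    ∑ A, (if Disjoint A S then 0 else bernoulliWeight p A) = 1 - ∏ t ∈ S, (1 - p t) := by
  have htotal := sum_bernoulliWeight_of_disjoint p ∅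
  simp only [disjoint_empty_right, if_true, prod_empty] at htotal
  rw [← sum_bernoulliWeight_of_disjoint p S, ← htotal, ← sum_sub_distrib]
  refine sum_congr rfl fun A _ => ?_
  split_ifs <;> ring

end BernoulliWeight

section Gap

variable {m : ℕ}

/-- `gap v s = v s - v (s + 1)`, where `v` is read as `0` past the last index. -/
def gap (v : Fin m → ℝ) (s : Fin m) : ℝ :=
  v s - if h : s.val + 1 < m then v ⟨s.val + 1, h⟩ else 0

lemma gap_nonneg {v : Fin m → ℝ} (hv : Antitone v) (hv0 : ∀ s, 0 ≤ v s) (s : Fin m) :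
    0 ≤ gap v s := by
  unfold gap
  split_ifs with h
  · exact sub_nonneg.2 (hv (Fin.le_def.2 (Nat.le_succ _)))
  · simpa using hv0 s

lemma sum_Ici_gap (v : Fin m → ℝ) (t : Fin m) : ∑ s ∈ Ici t, gap v s = v t := by
  set V : ℕ → ℝ := fun j => if h : j < m then v ⟨j, h⟩ else 0
  have hgap : ∀ s : Fin m, gap v s = -(V (s.val + 1) - V s.val) := by
    intro s
    simp [gap, V, s.isLt]
  calc ∑ s ∈ Ici t, gap v s = ∑ s ∈ Ici t, -(V (s.val + 1) - V s.val) :=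
        sum_congr rfl fun s _ => hgap s
    _ = ∑ j ∈ (Ici t).map Fin.valEmbedding, -(V (j + 1) - V j) :=
        (sum_map (Ici t) Fin.valEmbedding fun j => -(V (j + 1) - V j)).symm
    _ = v t := by
        rw [Fin.map_valEmbedding_Ici, sum_neg_distrib, sum_Ico_sub V t.isLt.le]
        simp [V, t.isLt]

lemma sum_gap_mul_sum_Iic (v g : Fin m → ℝ) :
    ∑ s, gap v s * ∑ t ∈ Iic s, g t = ∑ t, g t * v t := by
  simp_rw [mul_sum]
  rw [sum_comm' (t' := univ) (s' := Ici) (by simp)]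
  simp_rw [← sum_mul, sum_Ici_gap, mul_comm]

lemma sum_gap_of_not_disjoint_le_fold_max (v : Fin m → ℝ) (A : Finset (Fin m)) :
    ∑ s, (if Disjoint A (Iic s) then 0 else gap v s) ≤ A.fold max 0 v := by
  rcases A.eq_empty_or_nonempty with rfl | hA
  · simp
  have hmeet : ∀ s, ¬ Disjoint A (Iic s) ↔ A.min' hA ≤ s := by
    intro s
    simp only [disjoint_left, mem_Iic, not_forall, not_not, exists_prop]
    exact ⟨fun ⟨t, ht, hts⟩ => (A.min'_le t ht).trans hts, fun h => ⟨_, A.min'_mem hA, h⟩⟩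
  calc ∑ s, (if Disjoint A (Iic s) then 0 else gap v s)
      = ∑ s ∈ Ici (A.min' hA), gap v s := by
        rw [← filter_le_eq_Ici, sum_filter]
        exact sum_congr rfl fun s _ => by simp only [← hmeet, ite_not]
    _ = v (A.min' hA) := sum_Ici_gap v _
    _ ≤ A.fold max 0 v := (le_fold_max _).2 (Or.inr ⟨_, A.min'_mem hA, le_rfl⟩)

lemma sum_gap_mul_one_sub_prod_le_expectedMax {p : Fin m → ℝ} (v : Fin m → ℝ)
    (hp0 : ∀ s, 0 ≤ p s) (hp1 : ∀ s, p s ≤ 1) :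
    ∑ s, gap v s * (1 - ∏ t ∈ Iic s, (1 - p t)) ≤ expectedMax p v := by
  calc ∑ s, gap v s * (1 - ∏ t ∈ Iic s, (1 - p t))
      = ∑ A, bernoulliWeight p A * ∑ s, (if Disjoint A (Iic s) then 0 else gap v s) := by
        simp_rw [← sum_bernoulliWeight_of_not_disjoint, mul_sum, sum_comm (γ := Fin m)]
        refine sum_congr rfl fun A _ => sum_congr rfl fun s _ => ?_
        split_ifs <;> ring
    _ ≤ ∑ A, bernoulliWeight p A * A.fold max 0 v :=
        sum_le_sum fun A _ => mul_le_mul_of_nonneg_left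
          (sum_gap_of_not_disjoint_le_fold_max v A) (bernoulliWeight_nonneg hp0 hp1 A)
    _ = expectedMax p v := rfl

end Gap

/-- Chord of the concave function `x ↦ 1 - exp (-x)` between `0` and `1`. -/
lemma mul_le_one_sub_exp_neg {x : ℝ} (h0 : 0 ≤ x) (h1 : x ≤ 1) :
    (1 - 1 / Real.exp 1) * x ≤ 1 - Real.exp (-x) := by
  have hconv := convexOn_exp.2 (Set.mem_univ 0) (Set.mem_univ (-1))
    (sub_nonneg.2 h1) h0 (sub_add_cancel 1 x)
  simp only [smul_eq_mul, mul_zero, zero_add, mul_neg, mul_one, Real.exp_zero] at hconv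
  simp only [Real.exp_neg, one_div] at hconv ⊢
  linarith

lemma mul_sum_le_one_sub_prod_one_sub {ι : Type*} {s : Finset ι} {q : ι → ℝ}
    (hq0 : ∀ i ∈ s, 0 ≤ q i) (hq1 : ∑ i ∈ s, q i ≤ 1) :
    (1 - 1 / Real.exp 1) * ∑ i ∈ s, q i ≤ 1 - ∏ i ∈ s, (1 - q i) := by
  have hprod : ∏ i ∈ s, (1 - q i) ≤ Real.exp (-∑ i ∈ s, q i) := by
    rw [← sum_neg_distrib, Real.exp_sum]
    refine prod_le_prod (fun i hi => sub_nonneg.2 ?_) fun i _ => Real.one_sub_le_exp_neg _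
    exact (single_le_sum hq0 hi).trans hq1
  linarith [mul_le_one_sub_exp_neg (sum_nonneg hq0) hq1]

section CappedProb

variable {ι : Type*} [LinearOrder ι] [LocallyFiniteOrderBot ι] {p : ι → ℝ} {b : ι}

/-- The modified probabilities `p'` of the argument, of total mass `1`. -/
def cappedProb (p : ι → ℝ) (b t : ι) : ℝ :=
  if t < b then p t else if t = b then 1 - ∑ s ∈ Iio b, p s else 0

lemma sum_Iio_lt_one_of_forall_lt (h : ∀ a < b, ∑ s ∈ Iic a, p s < 1) :
    ∑ s ∈ Iio b, p s < 1 := by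
  rcases (Iio b).eq_empty_or_nonempty with hempty | hne
  · simp [hempty]
  have hIio : Iio b = Iic ((Iio b).max' hne) := by
    ext t
    simp only [mem_Iic, mem_Iio]
    exact ⟨fun ht => le_max' _ t (mem_Iio.2 ht), fun ht => ht.trans_lt (mem_Iio.1 (max'_mem _ hne))⟩
  rw [hIio]
  exact h _ (mem_Iio.1 (max'_mem _ hne))

lemma cappedProb_nonneg (hp0 : ∀ s, 0 ≤ p s) (hb : ∑ s ∈ Iio b, p s ≤ 1) (t : ι) :
    0 ≤ cappedProb p b t := by
  unfold cappedProb
  split_ifs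
  · exact hp0 t
  · exact sub_nonneg.2 hb
  · exact le_rfl

lemma cappedProb_le (hp0 : ∀ s, 0 ≤ p s) (hb : 1 ≤ ∑ s ∈ Iic b, p s) (t : ι) :
    cappedProb p b t ≤ p t := by
  unfold cappedProb
  split_ifs with hlt heq
  · exact le_rfl
  · rw [← Iio_insert, sum_insert (by simp)] at hb
    subst heq
    linarith
  · exact hp0 t

lemma sum_cappedProb [Fintype ι] : ∑ t, cappedProb p b t = 1 := by
  rw [← sum_subset (subset_univ (Iic b)), ← Iio_insert, sum_insert (by simp)]
  · have hbelow : ∀ t ∈ Iio b, cappedProb p b t = p t := fun t ht => if_pos (mem_Iio.1 ht)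
    rw [sum_congr rfl hbelow]
    simp [cappedProb]
  · intro t _ ht
    simp only [mem_Iic, not_le] at ht
    simp [cappedProb, ht.not_gt, ht.ne']

lemma cappedProb_mul_sub {v : ι → ℝ} (hv : Antitone v) (t : ι) :
    cappedProb p b t * (v t - v b) = p t * max (v t - v b) 0 := by
  unfold cappedProb
  split_ifs with hlt heq
  · rw [max_eq_left (sub_nonneg.2 (hv hlt.le))]
  · simp [heq]
  · rw [max_eq_right (sub_nonpos.2 (hv (not_lt.1 hlt))), mul_zero, zero_mul]

end CappedProb

end

theorem expectedMax_ge_truncated_sum {m : ℕ} (p v : Fin m → ℝ) (b : Fin m)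
    (hp0 : ∀ s, 0 ≤ p s) (hp1 : ∀ s, p s ≤ 1)
    (hv : ∀ s t : Fin m, s ≤ t → v t ≤ v s) (hv0 : ∀ s, 0 ≤ v s)
    (hb : 1 ≤ ∑ s ∈ Finset.univ.filter (fun s => s ≤ b), p s)
    (hbmin : ∀ a : Fin m, a < b →
      ∑ s ∈ Finset.univ.filter (fun s => s ≤ a), p s < 1) :
    (1 - 1 / Real.exp 1) * (v b + ∑ s, p s * max (v s - v b) 0) ≤
      expectedMax p v := by
  simp only [filter_ge_eq_Iic] at hb hbmin
  set q := cappedProb p b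
  have hq0 : ∀ t, 0 ≤ q t := cappedProb_nonneg hp0 (sum_Iio_lt_one_of_forall_lt hbmin).le
  have hqp : ∀ t, q t ≤ p t := cappedProb_le hp0 hb
  have hhit : ∀ s, (1 - 1 / Real.exp 1) * ∑ t ∈ Iic s, q t ≤ 1 - ∏ t ∈ Iic s, (1 - p t) := by
    intro s
    refine (mul_sum_le_one_sub_prod_one_sub (fun t _ => hq0 t) ?_).trans ?_
    · exact (sum_le_sum_of_subset_of_nonneg (subset_univ _) fun t _ _ => hq0 t).trans
        sum_cappedProb.le
    · exact sub_le_sub_left (prod_le_prod (fun t _ => sub_nonneg.2 (hp1 t))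
        fun t _ => sub_le_sub_left (hqp t) 1) 1
  have htarget : v b + ∑ s, p s * max (v s - v b) 0 = ∑ t, q t * v t := by
    simp_rw [← cappedProb_mul_sub hv, mul_sub, sum_sub_distrib, ← sum_mul, sum_cappedProb]
    ring
  calc (1 - 1 / Real.exp 1) * (v b + ∑ s, p s * max (v s - v b) 0)
      = ∑ s, gap v s * ((1 - 1 / Real.exp 1) * ∑ t ∈ Iic s, q t) := by
        rw [htarget, ← sum_gap_mul_sum_Iic, mul_sum]
        exact sum_congr rfl fun s _ => by ring
    _ ≤ ∑ s, gap v s * (1 - ∏ t ∈ Iic s, (1 - p t)) :=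
        sum_le_sum fun s _ => mul_le_mul_of_nonneg_left (hhit s) (gap_nonneg hv hv0 s)
    _ ≤ expectedMax p v := sum_gap_mul_one_sub_prod_le_expectedMax v hp0 hp1
end

section
/- Fix reals c₁ ≥ c₂ ≥ ... ≥ c_m ≥ 0 and probabilities p₁, ..., p_m ∈ [0,1] with Σ_s p_s ≥ 1. Let b = min{a : Σ_{s=1}^a p_s ≥ 1} and B̄ = c_b. Define f(B) = B + Σ_{s=1}^m p_s · (c_s - B)⁺. Then for every ε > 0, f(B̄ + ε) > f(B̄). -/
/-!
Raising the threshold from `B` to `B + ε` adds `ε` to the first term of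
`f(B) = B + ∑ p_s (c_s - B)⁺` and lowers each summand `p_s (c_s - B)⁺` by at most `ε p_s`,
and only for the `s` with `c_s > B`. Hence `f(B + ε) - f(B) ≥ ε (1 - ∑_{c_s > B} p_s)`.
For `B = c_b` the indices with `c_s > c_b` all precede `b`, and by minimality of `b` their
mass is `< 1`.
-/

open Finset

theorem sum_mul_max_sub_le_add {ι : Type*} (s : Finset ι) (p c : ι → ℝ)
    (hp : ∀ i ∈ s, 0 ≤ p i) (B : ℝ) {ε : ℝ} (hε : 0 ≤ ε) :
    ∑ i ∈ s, p i * max (c i - B) 0 ≤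
      ∑ i ∈ s, p i * max (c i - (B + ε)) 0 + ε * ∑ i ∈ s with B < c i, p i := by
  rw [sum_filter, mul_sum, ← sum_add_distrib]
  refine sum_le_sum fun i hi => ?_
  by_cases h : B < c i
  · have hmax : max (c i - B) 0 ≤ max (c i - (B + ε)) 0 + ε := by
      rw [max_le_iff]; constructor
      · linarith [le_max_left (c i - (B + ε)) 0]
      · linarith [le_max_right (c i - (B + ε)) 0]
    rw [if_pos h]
    nlinarith [mul_le_mul_of_nonneg_left hmax (hp i hi)]
  · have hB : c i - B ≤ 0 := by linarith
    simp [if_neg h, max_eq_right hB, max_eq_right (show c i - (B + ε) ≤ 0 by linarith)]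

theorem add_sum_mul_max_sub_lt {ι : Type*} (s : Finset ι) (p c : ι → ℝ)
    (hp : ∀ i ∈ s, 0 ≤ p i) (B : ℝ) (hmass : ∑ i ∈ s with B < c i, p i < 1)
    {ε : ℝ} (hε : 0 < ε) :
    B + ∑ i ∈ s, p i * max (c i - B) 0 < (B + ε) + ∑ i ∈ s, p i * max (c i - (B + ε)) 0 := by
  have hdrop := sum_mul_max_sub_le_add s p c hp B hε.le
  have hloss : ε * ∑ i ∈ s with B < c i, p i < ε := by
    simpa using mul_lt_mul_of_pos_left hmass hε
  linarith

theorem sum_filter_lt_lt_one_of_forall_le {ι : Type*} [Fintype ι] [LinearOrder ι] [PredOrder ι]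
    (p : ι → ℝ) (b : ι) (h : ∀ a < b, ∑ s with s ≤ a, p s < 1) :
    ∑ s with s < b, p s < 1 := by
  by_cases hb : IsMin b
  · simp [filter_eq_empty_iff.2 fun s _ => hb.not_lt]
  · simpa only [Order.le_pred_iff_of_not_isMin hb] using
      h (Order.pred b) (Order.pred_lt_iff_not_isMin.2 hb)

theorem Antitone.sum_filter_apply_lt_le_sum_filter_lt {ι : Type*} [Fintype ι] [LinearOrder ι]
    {c : ι → ℝ} (hc : Antitone c) (p : ι → ℝ) (hp : ∀ s, 0 ≤ p s) (b : ι) :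
    ∑ s with c b < c s, p s ≤ ∑ s with s < b, p s :=
  sum_le_sum_of_subset_of_nonneg
    (fun s hs => by simpa using hc.reflect_lt (mem_filter.1 hs).2) fun s _ _ => hp s

theorem truncation_threshold_increase_strict_general {m : ℕ} (p c : Fin m → ℝ) (b : Fin m)
    (hp0 : ∀ s, 0 ≤ p s)
    (hc : ∀ s t : Fin m, s ≤ t → c t ≤ c s)
    (hbmin : ∀ a : Fin m, a < b →
      ∑ s ∈ Finset.univ.filter (fun s => s ≤ a), p s < 1)
    (ε : ℝ) (hε : 0 < ε) :
    (c b) + ∑ s, p s * max (c s - c b) 0 <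
      (c b + ε) + ∑ s, p s * max (c s - (c b + ε)) 0 := by
  have hmass : ∑ s with c b < c s, p s < 1 :=
    (Antitone.sum_filter_apply_lt_le_sum_filter_lt (fun s t => hc s t) p hp0 b).trans_lt
      (sum_filter_lt_lt_one_of_forall_le p b hbmin)
  exact add_sum_mul_max_sub_lt univ p c (fun s _ => hp0 s) (c b) hmass hε

theorem truncation_threshold_increase_strict {m : ℕ} (p c : Fin m → ℝ) (b : Fin m)
    (hp0 : ∀ s, 0 ≤ p s) (hp1 : ∀ s, p s ≤ 1)
    (hc : ∀ s t : Fin m, s ≤ t → c t ≤ c s) (hc0 : ∀ s, 0 ≤ c s)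
    (hb : 1 ≤ ∑ s ∈ Finset.univ.filter (fun s => s ≤ b), p s)
    (hbmin : ∀ a : Fin m, a < b →
      ∑ s ∈ Finset.univ.filter (fun s => s ≤ a), p s < 1)
    (ε : ℝ) (hε : 0 < ε) :
    (c b) + ∑ s, p s * max (c s - c b) 0 <
      (c b + ε) + ∑ s, p s * max (c s - (c b + ε)) 0 :=
  truncation_threshold_increase_strict_general p c b hp0 hc hbmin ε hε
end

section
/- Fix reals c₁ ≥ c₂ ≥ ... ≥ c_m ≥ 0 and probabilities p₁, ..., p_m ∈ [0,1] with Σ_s p_s ≥ 1. Let b = min{a : Σ_{s=1}^a p_s ≥ 1} and B̄ = c_b. Define f(B) = B + Σ_{s=1}^m p_s · (c_s - B)⁺. Then for every ε > 0, f(B̄ - ε) ≥ f(B̄). -/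
/-!
Lowering the threshold from `B` to `B - ε` saves `ε` on the first summand, but every outcome `s`
with `c s ≥ B` then pays exactly `ε` more in its truncated part, and no outcome pays less. The
outcomes `s ≤ b` all have `c s ≥ c b` and carry total probability at least `1`, so the extra
payment is at least `ε`.
-/

open Finset

noncomputable def truncationCost {ι : Type*} [Fintype ι] (p c : ι → ℝ) (B : ℝ) : ℝ :=
  B + ∑ s, p s * max (c s - B) 0

lemma max_sub_zero_le_max_sub_sub_zero (x B : ℝ) {ε : ℝ} (hε : 0 ≤ ε) :
    max (x - B) 0 ≤ max (x - (B - ε)) 0 :=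
  max_le_max_right 0 (by linarith)

lemma max_sub_sub_zero_sub_max_sub_zero_of_le {x B : ℝ} (ε : ℝ) (hε : 0 ≤ ε) (hB : B ≤ x) :
    max (x - (B - ε)) 0 - max (x - B) 0 = ε := by
  rw [max_eq_left (by linarith), max_eq_left (by linarith)]
  ring

theorem truncationCost_le_sub_of_one_le_sum {ι : Type*} [Fintype ι] (p c : ι → ℝ)
    (hp : ∀ s, 0 ≤ p s) (S : Finset ι) {B : ℝ} (hS : ∀ s ∈ S, B ≤ c s)
    (hpS : 1 ≤ ∑ s ∈ S, p s) {ε : ℝ} (hε : 0 ≤ ε) :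
    truncationCost p c B ≤ truncationCost p c (B - ε) := by
  set δ : ι → ℝ := fun s => p s * (max (c s - (B - ε)) 0 - max (c s - B) 0)
  have hδ_nonneg (s : ι) : 0 ≤ δ s :=
    mul_nonneg (hp s) (sub_nonneg.2 (max_sub_zero_le_max_sub_sub_zero (c s) B hε))
  have hδ_S : ∑ s ∈ S, δ s = ε * ∑ s ∈ S, p s := by
    rw [mul_sum]
    refine sum_congr rfl fun s hs => ?_
    simp only [δ, max_sub_sub_zero_sub_max_sub_zero_of_le ε hε (hS s hs), mul_comm]
  have hε_le : ε ≤ ∑ s, δ s :=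
    calc ε ≤ ε * ∑ s ∈ S, p s := le_mul_of_one_le_right hε hpS
      _ = ∑ s ∈ S, δ s := hδ_S.symm
      _ ≤ ∑ s, δ s := sum_le_sum_of_subset_of_nonneg (subset_univ S) fun s _ _ => hδ_nonneg s
  have hδ_sum : ∑ s, δ s =
      ∑ s, p s * max (c s - (B - ε)) 0 - ∑ s, p s * max (c s - B) 0 := by
    simp only [δ, mul_sub, sum_sub_distrib]
  unfold truncationCost
  linarith

theorem truncation_threshold_decrease_general {m : ℕ} (p c : Fin m → ℝ) (b : Fin m)
    (hp0 : ∀ s, 0 ≤ p s)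
    (hc : ∀ s t : Fin m, s ≤ t → c t ≤ c s)
    (hb : 1 ≤ ∑ s ∈ Finset.univ.filter (fun s => s ≤ b), p s)
    (ε : ℝ) (hε : 0 < ε) :
    (c b - ε) + ∑ s, p s * max (c s - (c b - ε)) 0 ≥
      (c b) + ∑ s, p s * max (c s - c b) 0 :=
  truncationCost_le_sub_of_one_le_sum p c hp0 _
    (fun s hs => hc s b (mem_filter.1 hs).2) hb hε.le

theorem truncation_threshold_decrease {m : ℕ} (p c : Fin m → ℝ) (b : Fin m)
    (hp0 : ∀ s, 0 ≤ p s) (hp1 : ∀ s, p s ≤ 1)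
    (hc : ∀ s t : Fin m, s ≤ t → c t ≤ c s) (hc0 : ∀ s, 0 ≤ c s)
    (hb : 1 ≤ ∑ s ∈ Finset.univ.filter (fun s => s ≤ b), p s)
    (hbmin : ∀ a : Fin m, a < b →
      ∑ s ∈ Finset.univ.filter (fun s => s ≤ a), p s < 1)
    (ε : ℝ) (hε : 0 < ε) :
    (c b - ε) + ∑ s, p s * max (c s - (c b - ε)) 0 ≥
      (c b) + ∑ s, p s * max (c s - c b) 0 :=
  truncation_threshold_decrease_general p c b hp0 hc hb ε hε
end

section
/- Let Y₁, ..., Y_m be independent Bernoulli random variables with parameters p₁, ..., p_m satisfying Σ_s p_s ≥ 1, and values v₁, ..., v_m ≥ 0. Then min_{B ≥ 0} (B + Σ_s p_s (v_s - B)⁺) ≤ (1/(1 - 1/e)) · E[max_s Y_s v_s]. -/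
/-!
Layer cake. Both sides are integrals over thresholds `t ≥ 0`: `E[max] = ∫ P(max > t) dt` with
`P(max > t) = 1 - ∏_{v_s > t} (1 - p_s)`, and `B + ∑ p_s (v_s - B)⁺ = ∫ g_B` where `g_B t` is `1`
below `B` and the tail mass `∑_{v_s > t} p_s` above it. Taking for `B` the point where the tail
mass drops to at most `1` gives `g_B t = min 1 (tail mass)`, and
`1 - ∏ (1 - p_s) ≥ 1 - exp (-∑ p_s) ≥ (1 - 1/e) min 1 (∑ p_s)` by concavity of `x ↦ 1 - exp (-x)`.
-/

open Finset MeasureTheory Real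

variable {ι : Type*}

theorem prod_one_sub_le_exp_neg_sum {S : Finset ι} {q : ι → ℝ} (hq : ∀ s ∈ S, q s ≤ 1) :
    ∏ s ∈ S, (1 - q s) ≤ exp (-∑ s ∈ S, q s) := by
  rw [← sum_neg_distrib, exp_sum]
  exact prod_le_prod (fun s hs => sub_nonneg.2 (hq s hs)) fun s _ => one_sub_le_exp_neg _

theorem mul_min_one_le_one_sub_exp_neg {x : ℝ} (hx : 0 ≤ x) :
    (1 - exp (-1)) * min 1 x ≤ 1 - exp (-x) := by
  rcases le_total x 1 with hx1 | hx1
  · have := convexOn_exp.2 (Set.mem_univ 0) (Set.mem_univ (-1)) (sub_nonneg.2 hx1) hx (by ring)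
    simp only [smul_eq_mul, mul_zero, zero_add, exp_zero, mul_neg, mul_one] at this
    rw [min_eq_right hx1]
    linarith
  · rw [min_eq_left hx1, mul_one]
    gcongr

theorem mul_min_one_sum_le_one_sub_prod {S : Finset ι} {q : ι → ℝ} (hq0 : ∀ s ∈ S, 0 ≤ q s)
    (hq1 : ∀ s ∈ S, q s ≤ 1) :
    (1 - exp (-1)) * min 1 (∑ s ∈ S, q s) ≤ 1 - ∏ s ∈ S, (1 - q s) :=
  (mul_min_one_le_one_sub_exp_neg (sum_nonneg hq0)).trans
    (sub_le_sub_left (prod_one_sub_le_exp_neg_sum hq1) 1)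

theorem integrable_indicator_Ico_one (a b : ℝ) :
    Integrable ((Set.Ico a b).indicator (1 : ℝ → ℝ)) :=
  (integrable_indicator_iff measurableSet_Ico).2 (integrableOn_const measure_Ico_lt_top.ne)

section Fintype

variable [Fintype ι]

noncomputable def tailMass (p v : ι → ℝ) (t : ℝ) : ℝ := ∑ s with t < v s, p s

theorem tailMass_antitone {p : ι → ℝ} (hp : ∀ s, 0 ≤ p s) (v : ι → ℝ) :
    Antitone (tailMass p v) := fun _ _ hab =>
  sum_le_sum_of_subset_of_nonneg (monotone_filter_right _ fun _ _ h => hab.trans_lt h)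
    fun s _ _ => hp s

theorem exists_le_tailMass_eq (p v : ι → ℝ) {t : ℝ} (ht : 0 ≤ t) :
    ∃ u ∈ insert 0 (univ.image v), 0 ≤ u ∧ u ≤ t ∧ tailMass p v u = tailMass p v t := by
  set L := (insert 0 (univ.image v)).filter (· ≤ t)
  have h0L : (0 : ℝ) ∈ L := mem_filter.2 ⟨mem_insert_self _ _, ht⟩
  obtain ⟨hu, hut⟩ := mem_filter.1 (L.max'_mem ⟨0, h0L⟩)
  refine ⟨_, hu, L.le_max' 0 h0L, hut, ?_⟩
  refine congrArg (∑ s ∈ ·, p s) (filter_congr fun s _ => ⟨fun hs => ?_, hut.trans_lt⟩)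
  by_contra! hst
  have : v s ∈ L := mem_filter.2 ⟨mem_insert_of_mem (mem_image_of_mem v (mem_univ s)), hst⟩
  exact (L.le_max' _ this).not_gt hs

theorem exists_threshold {p : ι → ℝ} (hp : ∀ s, 0 ≤ p s) (v : ι → ℝ) :
    ∃ B, 0 ≤ B ∧ (∀ t, 0 ≤ t → t < B → 1 ≤ tailMass p v t) ∧
      ∀ t, B ≤ t → tailMass p v t ≤ 1 := by
  set U : Finset ℝ := insert 0 (univ.image v)
  have h0U : (0 : ℝ) ∈ U := mem_insert_self _ _
  have hvU : ∀ s, v s ∈ U := fun s => mem_insert_of_mem (mem_image_of_mem v (mem_univ s))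
  set C := U.filter fun u => 0 ≤ u ∧ tailMass p v u ≤ 1
  have hC : C.Nonempty := by
    have htop : tailMass p v (U.max' ⟨0, h0U⟩) = 0 :=
      sum_eq_zero fun s hs => absurd (mem_filter.1 hs).2 (U.le_max' _ (hvU s)).not_gt
    exact ⟨_, mem_filter.2 ⟨max'_mem _ _, U.le_max' 0 h0U, htop.le.trans zero_le_one⟩⟩
  obtain ⟨-, hB0, hB1⟩ := mem_filter.1 (C.min'_mem hC)
  refine ⟨C.min' hC, hB0, fun t ht htB => ?_, fun t hBt => (tailMass_antitone hp v hBt).trans hB1⟩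
  -- the tail mass at `t < B` is attained at a candidate `u ≤ t`, and `u ∉ C` by minimality of `B`
  by_contra! ht1
  obtain ⟨u, hu, hu0, hut, hut'⟩ := exists_le_tailMass_eq p v ht
  have : u ∈ C := mem_filter.2 ⟨hu, hu0, hut' ▸ ht1.le⟩
  exact ((C.min'_le u this).trans hut).not_gt htB

noncomputable def truncIntegrand (p v : ι → ℝ) (B t : ℝ) : ℝ :=
  (Set.Ico 0 B).indicator 1 t + ∑ s, p s * (Set.Ico B (v s)).indicator 1 t

theorem integrable_truncIntegrand (p v : ι → ℝ) (B : ℝ) : Integrable (truncIntegrand p v B) :=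
  (integrable_indicator_Ico_one _ _).add
    (integrable_finsetSum _ fun _ _ => (integrable_indicator_Ico_one _ _).const_mul _)

theorem integral_truncIntegrand (p v : ι → ℝ) {B : ℝ} (hB : 0 ≤ B) :
    ∫ t, truncIntegrand p v B t = B + ∑ s, p s * max (v s - B) 0 := by
  unfold truncIntegrand
  rw [integral_add (integrable_indicator_Ico_one _ _)
      (integrable_finsetSum _ fun _ _ => (integrable_indicator_Ico_one _ _).const_mul _),
    integral_finsetSum _ fun _ _ => (integrable_indicator_Ico_one _ _).const_mul _]
  simp_rw [integral_const_mul, integral_indicator_one measurableSet_Ico, volume_real_Ico, sub_zero,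
    max_eq_left hB]

theorem truncIntegrand_of_nonneg_of_lt {p v : ι → ℝ} {B t : ℝ} (ht : 0 ≤ t) (htB : t < B) :
    truncIntegrand p v B t = 1 := by
  simp [truncIntegrand, ht, htB, htB.not_ge]

theorem truncIntegrand_of_le {p v : ι → ℝ} {B t : ℝ} (hBt : B ≤ t) :
    truncIntegrand p v B t = tailMass p v t := by
  simp [truncIntegrand, tailMass, hBt, hBt.not_gt, sum_filter, Set.indicator_apply]

theorem truncIntegrand_of_neg {p v : ι → ℝ} {B t : ℝ} (hB : 0 ≤ B) (ht : t < 0) :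
    truncIntegrand p v B t = 0 := by
  simp [truncIntegrand, ht.not_ge, (ht.trans_le hB).not_ge]

variable [DecidableEq ι]

noncomputable def indepWeight (p : ι → ℝ) (A : Finset ι) : ℝ :=
  (∏ s ∈ A, p s) * ∏ s ∈ Aᶜ, (1 - p s)

theorem sum_indepWeight_disjoint (p : ι → ℝ) (S : Finset ι) :
    ∑ A, (if Disjoint A S then indepWeight p A else 0) = ∏ s ∈ S, (1 - p s) := by
  have h := Fintype.prod_add (fun s => if s ∉ S then p s else 0) (fun s => 1 - p s)
  rw [← prod_ite_mem_eq]
  convert h.symm using 1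
  · refine sum_congr rfl fun A _ => ?_
    simp only [prod_ite_zero, indepWeight, Finset.disjoint_left]
    split_ifs <;> ring
  · refine prod_congr rfl fun s _ => ?_
    split_ifs <;> simp_all

theorem sum_indepWeight (p : ι → ℝ) : ∑ A, indepWeight p A = 1 := by
  simpa using sum_indepWeight_disjoint p ∅

theorem sum_indepWeight_not_disjoint (p : ι → ℝ) (S : Finset ι) :
    ∑ A, (if Disjoint A S then 0 else indepWeight p A) = 1 - ∏ s ∈ S, (1 - p s) := by
  rw [← sum_indepWeight_disjoint p S, ← sum_indepWeight p, ← sum_sub_distrib]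
  exact sum_congr rfl fun A _ => by split_ifs <;> ring

theorem sum_indepWeight_mul_indicator (p v : ι → ℝ) {t : ℝ} (ht : 0 ≤ t) :
    ∑ A, indepWeight p A * (Set.Ico 0 (A.fold max 0 v)).indicator 1 t =
      1 - ∏ s with t < v s, (1 - p s) := by
  rw [← sum_indepWeight_not_disjoint]
  refine sum_congr rfl fun A _ => ?_
  have : t ∈ Set.Ico 0 (A.fold max 0 v) ↔ ¬Disjoint A ({s | t < v s} : Finset ι) := by
    simp [lt_fold_max, ht, Finset.not_disjoint_iff]
  by_cases h : Disjoint A ({s | t < v s} : Finset ι) <;> simp_all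

theorem mul_truncIntegrand_le {p v : ι → ℝ} (hp0 : ∀ s, 0 ≤ p s) (hp1 : ∀ s, p s ≤ 1) {B : ℝ}
    (hB0 : 0 ≤ B) (hlow : ∀ t, 0 ≤ t → t < B → 1 ≤ tailMass p v t)
    (hhigh : ∀ t, B ≤ t → tailMass p v t ≤ 1) (t : ℝ) :
    (1 - exp (-1)) * truncIntegrand p v B t ≤
      ∑ A, indepWeight p A * (Set.Ico 0 (A.fold max 0 v)).indicator 1 t := by
  rcases lt_or_ge t 0 with ht | ht
  · simp [truncIntegrand_of_neg hB0 ht, ht.not_ge]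
  have hmin : truncIntegrand p v B t = min 1 (tailMass p v t) := by
    rcases lt_or_ge t B with htB | hBt
    · rw [truncIntegrand_of_nonneg_of_lt ht htB, min_eq_left (hlow t ht htB)]
    · rw [truncIntegrand_of_le hBt, min_eq_right (hhigh t hBt)]
  rw [hmin, sum_indepWeight_mul_indicator p v ht]
  exact mul_min_one_sum_le_one_sub_prod (fun s _ => hp0 s) (fun s _ => hp1 s)

end Fintype

theorem expectedMax_eq_integral {m : ℕ} (p v : Fin m → ℝ) :
    expectedMax p v =
      ∫ t, ∑ A, indepWeight p A * (Set.Ico 0 (A.fold max 0 v)).indicator 1 t := by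
  rw [integral_finsetSum _ fun _ _ => (integrable_indicator_Ico_one _ _).const_mul _]
  refine sum_congr rfl fun A _ => ?_
  rw [integral_const_mul, integral_indicator_one measurableSet_Ico, volume_real_Ico, sub_zero,
    max_eq_left ((le_fold_max _).2 (Or.inl le_rfl))]
  rfl

theorem min_truncated_le_expectedMax_general {m : ℕ} (p v : Fin m → ℝ)
    (hp0 : ∀ s, 0 ≤ p s) (hp1 : ∀ s, p s ≤ 1) :
    ∃ B : ℝ, 0 ≤ B ∧
      B + ∑ s, p s * max (v s - B) 0 ≤
        (1 / (1 - 1 / Real.exp 1)) * expectedMax p v := by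
  obtain ⟨B, hB0, hlow, hhigh⟩ := exists_threshold hp0 v
  refine ⟨B, hB0, ?_⟩
  have hc : 0 < 1 - exp (-1) := sub_pos.2 (exp_lt_one_iff.2 neg_one_lt_zero)
  have key : (1 - exp (-1)) * (B + ∑ s, p s * max (v s - B) 0) ≤ expectedMax p v := by
    rw [← integral_truncIntegrand p v hB0, ← integral_const_mul, expectedMax_eq_integral]
    exact integral_mono ((integrable_truncIntegrand p v B).const_mul _)
      (integrable_finsetSum _ fun _ _ => (integrable_indicator_Ico_one _ _).const_mul _)
      (mul_truncIntegrand_le hp0 hp1 hB0 hlow hhigh)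
  rw [one_div, one_div, ← exp_neg, inv_mul_eq_div, le_div_iff₀ hc]
  linarith

/-- The truncated-sum objective at its optimal nonnegative threshold is at most
`1/(1-1/e)` times the expected maximum: some `B ≥ 0` achieves this bound. -/
theorem min_truncated_le_expectedMax {m : ℕ} (p v : Fin m → ℝ)
    (hp0 : ∀ s, 0 ≤ p s) (hp1 : ∀ s, p s ≤ 1) (hv0 : ∀ s, 0 ≤ v s)
    (hsum : 1 ≤ ∑ s, p s) :
    ∃ B : ℝ, 0 ≤ B ∧
      B + ∑ s, p s * max (v s - B) 0 ≤
        (1 / (1 - 1 / Real.exp 1)) * expectedMax p v :=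
  min_truncated_le_expectedMax_general p v hp0 hp1
end

section
/- Let Y₁, ..., Y_m be independent Bernoullis with parameters p₁, ..., p_m, and values v₁, ..., v_m ≥ 0. Then E[max_s Y_s v_s] ≥ Σ_{s} P(Y_s = 1) v_s − Σ_{s < s'} P(Y_s = 1) P(Y_{s'} = 1) max(v_s, v_{s'}). -/
/-!
For every realization `A`, `∑_{s ∈ A} v s - ∑_{s < s' in A} max (v s) (v s') ≤ max_{s ∈ A} v s`:
adding a new largest index `a` changes the left side by
`v a - ∑_{s ∈ A} max (v s) (v a) ≤ v a - min M (v a) = max M (v a) - M`, where `M = max_{s ∈ A} v s`,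
and the right side by exactly that amount.
Averaging over `A`, and using `P(S ⊆ A) = ∏_{s ∈ S} p s` for `|S| ≤ 2`, gives the bound.
-/

open Finset

section
variable {ι : Type*} [Fintype ι] [DecidableEq ι]

noncomputable def subsetWeight (p : ι → ℝ) (A : Finset ι) : ℝ :=
  (∏ s ∈ A, p s) * ∏ s ∈ Aᶜ, (1 - p s)

lemma subsetWeight_nonneg {p : ι → ℝ} (hp0 : ∀ s, 0 ≤ p s) (hp1 : ∀ s, p s ≤ 1)
    (A : Finset ι) : 0 ≤ subsetWeight p A :=
  mul_nonneg (prod_nonneg fun s _ ↦ hp0 s) (prod_nonneg fun s _ ↦ sub_nonneg.2 (hp1 s))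

lemma sum_subsetWeight_of_subset (p : ι → ℝ) (S : Finset ι) :
    ∑ A with S ⊆ A, subsetWeight p A = ∏ s ∈ S, p s := by
  have hsplit : ∀ s, (if s ∈ S then p s else 1) = p s + if s ∉ S then 1 - p s else 0 := by
    intro s; split_ifs <;> ring
  have hvanish : ∀ A : Finset ι, ∏ s ∈ Aᶜ, (if s ∉ S then 1 - p s else 0) =
      if S ⊆ A then ∏ s ∈ Aᶜ, (1 - p s) else 0 := by
    intro A
    rw [prod_ite_zero]
    congr 1
    simp only [mem_compl, not_imp_not]
    rfl
  calc ∑ A with S ⊆ A, subsetWeight p A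
      = ∑ A, (∏ s ∈ A, p s) * ∏ s ∈ univ \ A, (if s ∉ S then 1 - p s else 0) := by
        simp_rw [sum_filter, ← compl_eq_univ_sdiff, hvanish, mul_ite, mul_zero, subsetWeight]
    _ = ∏ s, (if s ∈ S then p s else 1) := by rw [← powerset_univ, ← prod_add]; simp_rw [hsplit]
    _ = ∏ s ∈ S, p s := by rw [prod_ite_mem, univ_inter]

lemma sum_subsetWeight_mul_sum (p f : ι → ℝ) :
    ∑ A, subsetWeight p A * ∑ s ∈ A, f s = ∑ s, p s * f s := by
  simp_rw [mul_sum]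
  rw [sum_comm' (t' := univ) (s' := fun s ↦ {A | {s} ⊆ A}) (by simp)]
  simp_rw [← sum_mul, sum_subsetWeight_of_subset, prod_singleton]
end

section
variable {ι : Type*} [LinearOrder ι]

def pairSum {M : Type*} [AddCommMonoid M] (g : ι → ι → M) (A : Finset ι) : M :=
  ∑ s ∈ A, ∑ s' ∈ A with s < s', g s s'

lemma pairSum_insert_of_forall_lt {M : Type*} [AddCommMonoid M] (g : ι → ι → M) {A : Finset ι}
    {a : ι} (ha : ∀ s ∈ A, s < a) :
    pairSum g (insert a A) = pairSum g A + ∑ s ∈ A, g s a := by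
  have ha' : a ∉ A := fun h ↦ lt_irrefl a (ha a h)
  have htop : (insert a A).filter (a < ·) = ∅ :=
    filter_eq_empty_iff.2 fun s hs ↦
      not_lt.2 <| (mem_insert.1 hs).elim le_of_eq fun h ↦ (ha s h).le
  rw [pairSum, sum_insert ha', htop, sum_empty, zero_add, pairSum, ← sum_add_distrib]
  refine sum_congr rfl fun s hs ↦ ?_
  rw [filter_insert, if_pos (ha s hs), sum_insert (fun h ↦ ha' (mem_filter.1 h).1), add_comm]

lemma sum_subsetWeight_mul_pairSum [Fintype ι] (p : ι → ℝ) (g : ι → ι → ℝ) :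
    ∑ A, subsetWeight p A * pairSum g A = pairSum (fun s s' ↦ p s * p s' * g s s') univ := by
  simp_rw [pairSum, mul_sum]
  rw [sum_comm' (t' := univ) (s' := fun s ↦ {A | {s} ⊆ A}) (by simp)]
  refine sum_congr rfl fun s _ ↦ ?_
  rw [sum_comm' (t' := {s' | s < s'}) (s' := fun s' ↦ {A | {s, s'} ⊆ A})
    (by intro A s'; simp [insert_subset_iff]; tauto)]
  refine sum_congr rfl fun s' hs' ↦ ?_
  rw [← sum_mul, sum_subsetWeight_of_subset, prod_pair (mem_filter.1 hs').2.ne]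

lemma sum_sub_pairSum_max_le_fold_max {v : ι → ℝ} (hv : ∀ s, 0 ≤ v s) (A : Finset ι) :
    ∑ s ∈ A, v s - pairSum (fun s s' ↦ max (v s) (v s')) A ≤ A.fold max 0 v := by
  induction A using Finset.induction_on_max with
  | empty => simp [pairSum]
  | insert a A ha ih =>
    have ha' : a ∉ A := fun h ↦ lt_irrefl a (ha a h)
    have hcross : min (A.fold max 0 v) (v a) ≤ ∑ s ∈ A, max (v s) (v a) := by
      rcases A.eq_empty_or_nonempty with rfl | ⟨s₀, hs₀⟩
      · simp
      · exact (min_le_right _ _).trans <| (le_max_right _ _).trans <|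
          single_le_sum (fun s _ ↦ le_max_of_le_right (hv a)) hs₀
    rw [pairSum_insert_of_forall_lt _ ha, sum_insert ha', fold_insert ha']
    linarith [min_add_max (A.fold max 0 v) (v a), max_comm (v a) (A.fold max 0 v)]
end

theorem expectedMax_ge_inclusion_exclusion {m : ℕ} (p v : Fin m → ℝ)
    (hp0 : ∀ s, 0 ≤ p s) (hp1 : ∀ s, p s ≤ 1) (hv0 : ∀ s, 0 ≤ v s) :
    expectedMax p v ≥
      (∑ s, p s * v s) -
        ∑ s, ∑ s' ∈ Finset.univ.filter (fun s' => s < s'),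
          p s * p s' * max (v s) (v s') := by
  calc (∑ s, p s * v s) - pairSum (fun s s' ↦ p s * p s' * max (v s) (v s')) univ
      = ∑ A, subsetWeight p A * (∑ s ∈ A, v s - pairSum (fun s s' ↦ max (v s) (v s')) A) := by
        simp_rw [mul_sub, sum_sub_distrib, sum_subsetWeight_mul_sum, sum_subsetWeight_mul_pairSum]
    _ ≤ ∑ A, subsetWeight p A * A.fold max 0 v :=
        sum_le_sum fun A _ ↦ mul_le_mul_of_nonneg_left
          (sum_sub_pairSum_max_le_fold_max hv0 A) (subsetWeight_nonneg hp0 hp1 A)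
    _ = expectedMax p v := rfl
end
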